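/- Let p = n^{−α} with α ∈ (3/2, 2). Then with probability tending to 1 as n → ∞, all minimal vertex covers of the Erdős–Rényi random graph G(n,p) have the same cardinality. (Equivalently, the random edge ideal I(n,p) is unmixed with high probability.) -/

import Mathlib

open Filter

/-- Probability weight of a given graph `G` under the Erdős–Rényi model `G(n,p)`:
each of the `n.choose 2` possible edges is present independently with probability `p`. -/
noncomputable def graphWeight (n : ℕ) (p : ℝ) (G : SimpleGraph (Fin n)) : ℝ :=
  p ^ Nat.card G.edgeSet * (1 - p) ^ (n.choose 2 - Nat.card G.edgeSet)

/-- Probability of the event `A` under the Erdős–Rényi random graph `G(n,p)`. -/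
noncomputable def erProb (n : ℕ) (p : ℝ) (A : Set (SimpleGraph (Fin n))) : ℝ :=
  ∑ G : SimpleGraph (Fin n), A.indicator (graphWeight n p) G

/-- A set of vertices `C` is a vertex cover of `G` if every edge of `G` has an
endpoint in `C`. -/
def IsVertexCover {V : Type} (G : SimpleGraph V) (C : Set V) : Prop :=
  ∀ ⦃u w : V⦄, G.Adj u w → u ∈ C ∨ w ∈ C

/-- A vertex cover is minimal if no proper subset of it is a vertex cover. -/
def IsMinimalVertexCover {V : Type} (G : SimpleGraph V) (C : Set V) : Prop :=
  IsVertexCover G C ∧ ∀ D : Set V, D ⊂ C → ¬IsVertexCover G D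

/-- All minimal vertex covers of `G` have the same cardinality (equivalently, the
edge ideal of `G` is unmixed). -/
def Unmixed {V : Type} (G : SimpleGraph V) : Prop :=
  ∀ C D : Set V, IsMinimalVertexCover G C → IsMinimalVertexCover G D → C.ncard = D.ncard

/-!
For `α > 3/2` the expected number of paths of length two in `G(n,p)` is at most
`n³p² = n^(3-2α) → 0`, so with high probability every vertex has at most one neighbour.
In such a graph a minimal vertex cover contains exactly one endpoint of each edge (a vertex of
a minimal cover always has a neighbour outside it), so all minimal covers have as many vertices
as the graph has edges.
-/

namespace IsMinimalVertexCover

variable {V : Type} {G : SimpleGraph V} {C : Set V}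

theorem exists_adj_notMem (hC : IsMinimalVertexCover G C) {c : V} (hc : c ∈ C) :
    ∃ w, G.Adj c w ∧ w ∉ C := by
  by_contra! h
  have key : ∀ a b, G.Adj a b → a ∈ C → a ∈ C \ {c} ∨ b ∈ C \ {c} := by
    intro a b hab ha
    by_cases hac : a = c
    · subst hac
      exact Or.inr ⟨h b hab, hab.ne'⟩
    · exact Or.inl ⟨ha, hac⟩
  refine hC.2 (C \ {c}) (Set.sdiff_singleton_ssubset.2 hc) fun u w huw => ?_
  rcases hC.1 huw with hu | hw
  · exact key u w huw hu
  · exact (key w u huw.symm hw).symm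

theorem ncard_eq_ncard_edgeSet (hG : ∀ v, (G.neighborSet v).Subsingleton)
    (hC : IsMinimalVertexCover G C) : C.ncard = G.edgeSet.ncard := by
  choose! partner hadj hout using fun c (hc : c ∈ C) => hC.exists_adj_notMem hc
  refine Set.ncard_congr (fun c _ => s(c, partner c)) (fun c hc => hadj c hc) ?_ ?_
  · intro c d hc hd h
    rcases Sym2.eq_iff.1 h with ⟨rfl, -⟩ | ⟨rfl, -⟩
    · rfl
    · exact absurd hc (hout d hd)
  · intro e he
    induction e using Sym2.ind with
    | h u w =>
      rcases hC.1 he with hu | hw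
      · exact ⟨u, hu, by rw [hG u (hadj u hu) he]⟩
      · exact ⟨w, hw, by rw [hG w (hadj w hw) he.symm, Sym2.eq_swap]⟩

end IsMinimalVertexCover

theorem unmixed_of_neighborSet_subsingleton {V : Type} {G : SimpleGraph V}
    (hG : ∀ v, (G.neighborSet v).Subsingleton) : Unmixed G := fun _ _ hC hD => by
  rw [hC.ncard_eq_ncard_edgeSet hG, hD.ncard_eq_ncard_edgeSet hG]

open Finset

theorem Finset.sum_Icc_pow_mul_one_sub_pow {ι R : Type*} [DecidableEq ι] [CommRing R]
    {s E : Finset ι} (hs : s ⊆ E) (p : R) :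
    ∑ t ∈ Icc s E, p ^ #t * (1 - p) ^ (#E - #t) = p ^ #s := by
  have hinj : Set.InjOn (s ∪ ·) (E \ s).powerset := fun u hu v hv huv => by
    have hu : Disjoint s u := disjoint_of_subset_right (mem_powerset.1 hu) disjoint_sdiff
    have hv : Disjoint s v := disjoint_of_subset_right (mem_powerset.1 hv) disjoint_sdiff
    rw [← union_sdiff_cancel_left hu, ← union_sdiff_cancel_left hv]
    exact congrArg (· \ s) huv
  rw [Icc_eq_image_powerset hs, sum_image hinj]
  calc ∑ u ∈ (E \ s).powerset, p ^ #(s ∪ u) * (1 - p) ^ (#E - #(s ∪ u))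
      = ∑ u ∈ (E \ s).powerset, p ^ #s * (p ^ #u * (1 - p) ^ (#(E \ s) - #u)) := by
        refine sum_congr rfl fun u hu => ?_
        have hsu : Disjoint s u := disjoint_of_subset_right (mem_powerset.1 hu) disjoint_sdiff
        rw [card_union_of_disjoint hsu, card_sdiff_of_subset hs, pow_add, Nat.sub_add_eq, mul_assoc]
    _ = p ^ #s := by rw [← mul_sum, sum_pow_mul_eq_add_pow, add_sub_cancel, one_pow, mul_one]

open Classical in
theorem SimpleGraph.sum_eq_sum_powerset_edgeFinset {V M : Type*} [Fintype V] [DecidableEq V]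
    [AddCommMonoid M] (f : Finset (Sym2 V) → M) :
    ∑ G : SimpleGraph V, f G.edgeFinset = ∑ t ∈ (⊤ : SimpleGraph V).edgeFinset.powerset, f t := by
  refine sum_nbij' (fun G => G.edgeFinset) (fun t => fromEdgeSet ↑t) ?_ ?_ ?_ ?_ ?_
  · exact fun G _ => mem_powerset.2 (edgeFinset_mono le_top)
  · exact fun _ _ => mem_univ _
  · intro G _
    simp only [coe_edgeFinset, fromEdgeSet_edgeSet]
  · intro t ht
    ext e
    have hdiag : e ∈ t → ¬e.IsDiag := fun he => by simpa using mem_powerset.1 ht he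
    simpa [edgeSet_fromEdgeSet] using hdiag
  · exact fun _ _ => rfl

section ErdosRenyi

variable {n : ℕ} {p : ℝ}

open Classical in
theorem graphWeight_eq_card_edgeFinset (G : SimpleGraph (Fin n)) :
    graphWeight n p G =
      p ^ #G.edgeFinset * (1 - p) ^ (#(⊤ : SimpleGraph (Fin n)).edgeFinset - #G.edgeFinset) := by
  rw [graphWeight, SimpleGraph.card_edgeFinset_top_eq_card_choose_two, Fintype.card_fin,
    Nat.card_eq_fintype_card, SimpleGraph.edgeFinset_card]

theorem graphWeight_nonneg (hp0 : 0 ≤ p) (hp1 : p ≤ 1) (G : SimpleGraph (Fin n)) :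
    0 ≤ graphWeight n p G :=
  mul_nonneg (pow_nonneg hp0 _) (pow_nonneg (sub_nonneg.2 hp1) _)

open Classical in
theorem erProb_subset_edgeSet (s : Finset (Sym2 (Fin n))) (hs : ∀ e ∈ s, ¬e.IsDiag) :
    erProb n p {G | ↑s ⊆ G.edgeSet} = p ^ #s := by
  have hsE : s ⊆ (⊤ : SimpleGraph (Fin n)).edgeFinset := fun e he => by simpa using hs e he
  calc erProb n p {G | ↑s ⊆ G.edgeSet}
      = ∑ G : SimpleGraph (Fin n), if s ⊆ G.edgeFinset then
          p ^ #G.edgeFinset * (1 - p) ^ (#(⊤ : SimpleGraph (Fin n)).edgeFinset - #G.edgeFinset)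
          else 0 := by
        refine sum_congr rfl fun G _ => ?_
        rw [Set.indicator_apply, graphWeight_eq_card_edgeFinset]
        exact if_congr (by rw [Set.mem_ofPred_eq, ← SimpleGraph.coe_edgeFinset, coe_subset]) rfl rfl
    _ = ∑ t ∈ Icc s (⊤ : SimpleGraph (Fin n)).edgeFinset,
          p ^ #t * (1 - p) ^ (#(⊤ : SimpleGraph (Fin n)).edgeFinset - #t) := by
        rw [SimpleGraph.sum_eq_sum_powerset_edgeFinset
          (fun t => if s ⊆ t then p ^ #t * (1 - p) ^ (#(⊤ : SimpleGraph (Fin n)).edgeFinset - #t)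
            else 0), ← sum_filter, Icc_eq_filter_powerset]
    _ = p ^ #s := sum_Icc_pow_mul_one_sub_pow hsE p

open Classical in
theorem erProb_univ : erProb n p Set.univ = 1 := by
  rw [erProb, Set.indicator_univ]
  simp only [graphWeight_eq_card_edgeFinset]
  rw [SimpleGraph.sum_eq_sum_powerset_edgeFinset
    (fun t => p ^ #t * (1 - p) ^ (#(⊤ : SimpleGraph (Fin n)).edgeFinset - #t)),
    sum_pow_mul_eq_add_pow, add_sub_cancel, one_pow]

theorem erProb_add_erProb_compl (A : Set (SimpleGraph (Fin n))) :
    erProb n p A + erProb n p Aᶜ = 1 := by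
  simp only [erProb, ← sum_add_distrib, Set.indicator_self_add_compl_apply]
  simpa [erProb] using erProb_univ (n := n) (p := p)

theorem erProb_mono {A B : Set (SimpleGraph (Fin n))} (hp0 : 0 ≤ p) (hp1 : p ≤ 1) (h : A ⊆ B) :
    erProb n p A ≤ erProb n p B :=
  sum_le_sum fun G _ =>
    Set.indicator_le_indicator_of_subset h (graphWeight_nonneg hp0 hp1) G

theorem erProb_le_one (hp0 : 0 ≤ p) (hp1 : p ≤ 1) (A : Set (SimpleGraph (Fin n))) :
    erProb n p A ≤ 1 :=
  erProb_univ (n := n) (p := p) ▸ erProb_mono hp0 hp1 (Set.subset_univ A)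

theorem erProb_biUnion_le {ι : Type*} (hp0 : 0 ≤ p) (hp1 : p ≤ 1) (I : Finset ι)
    (A : ι → Set (SimpleGraph (Fin n))) :
    erProb n p (⋃ i ∈ I, A i) ≤ ∑ i ∈ I, erProb n p (A i) := by
  simp only [erProb]
  rw [sum_comm]
  refine sum_le_sum fun G _ => ?_
  have hnonneg : ∀ i ∈ I, 0 ≤ (A i).indicator (graphWeight n p) G := fun i _ =>
    Set.indicator_nonneg (fun G _ => graphWeight_nonneg hp0 hp1 G) G
  by_cases hG : G ∈ ⋃ i ∈ I, A i
  · obtain ⟨i, hi, hGi⟩ := Set.mem_iUnion₂.1 hG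
    rw [Set.indicator_of_mem hG, ← Set.indicator_of_mem hGi (graphWeight n p)]
    exact single_le_sum hnonneg hi
  · rw [Set.indicator_of_notMem hG]
    exact sum_nonneg hnonneg

theorem erProb_exists_cherry_le (hp0 : 0 ≤ p) (hp1 : p ≤ 1) :
    erProb n p {G | ∃ v, ¬(G.neighborSet v).Subsingleton} ≤ n ^ 3 * p ^ 2 := by
  let T : Finset (Fin n × Fin n × Fin n) := {x | x.1 ≠ x.2.1 ∧ x.1 ≠ x.2.2 ∧ x.2.1 ≠ x.2.2}
  let cherry : Fin n × Fin n × Fin n → Finset (Sym2 (Fin n)) := fun x =>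
    {s(x.1, x.2.1), s(x.1, x.2.2)}
  have hcover : {G : SimpleGraph (Fin n) | ∃ v, ¬(G.neighborSet v).Subsingleton} ⊆
      ⋃ x ∈ T, {G | ↑(cherry x) ⊆ G.edgeSet} := by
    rintro G ⟨v, hv⟩
    obtain ⟨u, hu, w, hw, huw⟩ := Set.not_subsingleton_iff.1 hv
    refine Set.mem_iUnion₂.2 ⟨(v, u, w), ?_, ?_⟩
    · simpa [T] using ⟨hu.ne, hw.ne, huw⟩
    · simpa [cherry, Set.insert_subset_iff] using ⟨hu, hw⟩
  have hcherry : ∀ x ∈ T, erProb n p {G | ↑(cherry x) ⊆ G.edgeSet} = p ^ 2 := by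
    rintro ⟨v, u, w⟩ hx
    obtain ⟨hvu, hvw, huw⟩ : v ≠ u ∧ v ≠ w ∧ u ≠ w := by simpa [T] using hx
    have hcard : #(cherry (v, u, w)) = 2 := card_pair (by simp [huw, hvw])
    rw [erProb_subset_edgeSet _ (by simp [cherry, hvu, hvw]), hcard]
  have hT : (#T : ℝ) ≤ n ^ 3 := mod_cast (card_filter_le _ _).trans (by simp [pow_succ, mul_assoc])
  calc erProb n p {G | ∃ v, ¬(G.neighborSet v).Subsingleton}
      ≤ ∑ x ∈ T, erProb n p {G | ↑(cherry x) ⊆ G.edgeSet} :=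
        (erProb_mono hp0 hp1 hcover).trans (erProb_biUnion_le hp0 hp1 T _)
    _ = #T * p ^ 2 := by rw [sum_congr rfl hcherry, sum_const, nsmul_eq_mul]
    _ ≤ n ^ 3 * p ^ 2 := by gcongr

theorem one_sub_le_erProb_unmixed (hp0 : 0 ≤ p) (hp1 : p ≤ 1) :
    1 - n ^ 3 * p ^ 2 ≤ erProb n p {G | Unmixed G} := by
  have hbad : {G : SimpleGraph (Fin n) | Unmixed G}ᶜ ⊆
      {G | ∃ v, ¬(G.neighborSet v).Subsingleton} := fun _ hG =>
    not_forall.1 (mt unmixed_of_neighborSet_subsingleton hG)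
  linarith [erProb_add_erProb_compl (n := n) (p := p) {G | Unmixed G},
    (erProb_mono hp0 hp1 hbad).trans (erProb_exists_cherry_le hp0 hp1)]

end ErdosRenyi

theorem tendsto_natCast_pow_three_mul_rpow_neg_sq {α : ℝ} (hα : 3 / 2 < α) :
    Tendsto (fun n : ℕ => (n : ℝ) ^ 3 * ((n : ℝ) ^ (-α)) ^ 2) atTop (nhds 0) := by
  refine ((tendsto_rpow_neg_atTop (by linarith : 0 < 2 * α - 3)).comp
    tendsto_natCast_atTop_atTop).congr' ?_
  filter_upwards [eventually_gt_atTop 0] with n hn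
  have hn : (0 : ℝ) < n := Nat.cast_pos.2 hn
  rw [Function.comp_apply, ← Real.rpow_natCast, ← Real.rpow_natCast, ← Real.rpow_mul hn.le,
    ← Real.rpow_add hn]
  congr 1
  push_cast
  ring

theorem unmixed_whp_sparse_general (α : ℝ) (h1 : 3 / 2 < α) :
    Tendsto (fun n : ℕ => erProb n ((n : ℝ) ^ (-α)) {G | Unmixed G}) atTop (nhds 1) := by
  have hp0 (n : ℕ) : 0 ≤ (n : ℝ) ^ (-α) := Real.rpow_nonneg n.cast_nonneg _
  have hp1 (n : ℕ) (hn : 1 ≤ n) : (n : ℝ) ^ (-α) ≤ 1 :=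
    Real.rpow_le_one_of_one_le_of_nonpos (Nat.one_le_cast.2 hn) (by linarith)
  have hlower : Tendsto (fun n : ℕ => 1 - (n : ℝ) ^ 3 * ((n : ℝ) ^ (-α)) ^ 2) atTop (nhds 1) := by
    simpa using (tendsto_natCast_pow_three_mul_rpow_neg_sq h1).const_sub 1
  refine tendsto_of_tendsto_of_tendsto_of_le_of_le' hlower tendsto_const_nhds ?_ ?_ <;>
    filter_upwards [eventually_ge_atTop 1] with n hn
  · exact one_sub_le_erProb_unmixed (hp0 n) (hp1 n hn)
  · exact erProb_le_one (hp0 n) (hp1 n hn) _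

/-- For `p = n^{-α}` with `α ∈ (3/2, 2)`, with high probability all minimal vertex
covers of `G(n,p)` have the same cardinality, i.e. the random edge ideal `I(n,p)` is
unmixed. -/
theorem unmixed_whp_sparse (α : ℝ) (h1 : 3 / 2 < α) (h2 : α < 2) :
    Tendsto (fun n : ℕ => erProb n ((n : ℝ) ^ (-α)) {G | Unmixed G}) atTop (nhds 1) :=
  unmixed_whp_sparse_general α h1
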